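/- arXiv:2306.05187 — 2 statements merged into one kernel-verified Lean document; each statement's English description precedes it below -/
import Mathlib

section
/- Define the projection operator Proj(x, y, l) = y - l(x)·(∇l(x) ∇l(x)ᵀ / ‖∇l(x)‖²)·y when l(x) > 0 and yᵀ∇l(x) > 0, and Proj(x, y, l) = y otherwise. If x* satisfies l(x*) ≤ 0, l is convex and differentiable with ∇l(x) ≠ 0 whenever l(x) > 0, then (x - x*)ᵀ(Proj(x, y, l) - y) ≤ 0. -/
/-! By the first-order characterization of convexity, `⟪∇l x, x - x*⟫ ≥ l x - l x* > 0` whenever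
`l x > 0 ≥ l x*`, while in that case `Proj - y` is a nonnegative multiple of `-∇l x`. -/

open scoped RealInnerProductSpace

theorem ConvexOn.add_fderiv_sub_le {E : Type*} [NormedAddCommGroup E] [NormedSpace ℝ E]
    {s : Set E} {f : E → ℝ} {f' : E →L[ℝ] ℝ} {x y : E} (hf : ConvexOn ℝ s f)
    (hx : x ∈ s) (hy : y ∈ s) (hf' : HasFDerivAt f f' x) :
    f x + f' (y - x) ≤ f y := by
  have hline : ConvexOn ℝ (AffineMap.lineMap x y ⁻¹' s) (f ∘ AffineMap.lineMap x y) :=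
    hf.comp_affineMap _
  have hderiv : HasDerivAt (f ∘ AffineMap.lineMap x y) (f' (y - x)) (0 : ℝ) := by
    have hf'0 : HasFDerivAt f f' (AffineMap.lineMap x y (0 : ℝ)) := by simpa using hf'
    exact hf'0.comp_hasDerivAt _ AffineMap.hasDerivAt_lineMap
  have := hline.le_slope_of_hasDerivAt (by simpa using hx) (by simpa using hy) one_pos hderiv
  simp only [slope_def_field, Function.comp_apply, AffineMap.lineMap_apply_zero,
    AffineMap.lineMap_apply_one, sub_zero, div_one] at this
  linarith

theorem ConvexOn.sub_le_inner_gradient {E : Type*} [NormedAddCommGroup E] [InnerProductSpace ℝ E]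
    [CompleteSpace E] {s : Set E} {f : E → ℝ} {f' x y : E} (hf : ConvexOn ℝ s f)
    (hx : x ∈ s) (hy : y ∈ s) (hf' : HasGradientAt f f' x) :
    f x - f y ≤ ⟪f', x - y⟫ := by
  have := hf.add_fderiv_sub_le hx hy hf'.hasFDerivAt
  rw [InnerProductSpace.toDual_apply_apply, ← neg_sub, inner_neg_right] at this
  linarith

theorem stmt5_general (n : ℕ) (x y xs : EuclideanSpace ℝ (Fin n))
    (l : EuclideanSpace ℝ (Fin n) → ℝ)
    (gradl : EuclideanSpace ℝ (Fin n) → EuclideanSpace ℝ (Fin n))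
    (hconv : ConvexOn ℝ Set.univ l)
    (hgrad : ∀ z, HasGradientAt l (gradl z) z)
    (hxs : l xs ≤ 0)
    (Proj : EuclideanSpace ℝ (Fin n))
    (hProj : Proj = if l x > 0 ∧ (inner ℝ y (gradl x) : ℝ) > 0 then
        y - (l x * ((inner ℝ (gradl x) y : ℝ) / ‖gradl x‖ ^ 2)) • gradl x
      else y) :
    (inner ℝ (x - xs) (Proj - y) : ℝ) ≤ 0 := by
  split_ifs at hProj with hstep
  · obtain ⟨hlx, hyg⟩ := hstep
    have hdescent : 0 ≤ ⟪x - xs, gradl x⟫ := by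
      have := hconv.sub_le_inner_gradient (Set.mem_univ x) (Set.mem_univ xs) (hgrad x)
      rw [real_inner_comm]
      linarith
    have hcoeff : 0 ≤ l x * (⟪gradl x, y⟫ / ‖gradl x‖ ^ 2) := by
      rw [real_inner_comm] at hyg
      positivity
    rw [hProj, sub_sub_cancel_left, inner_neg_right, inner_smul_right, neg_nonpos]
    exact mul_nonneg hcoeff hdescent
  · simp [hProj]

theorem stmt5 (n : ℕ) (x y xs : EuclideanSpace ℝ (Fin n))
    (l : EuclideanSpace ℝ (Fin n) → ℝ)
    (gradl : EuclideanSpace ℝ (Fin n) → EuclideanSpace ℝ (Fin n))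
    (hconv : ConvexOn ℝ Set.univ l)
    (hgrad : ∀ z, HasGradientAt l (gradl z) z)
    (hne : ∀ z, l z > 0 → gradl z ≠ 0)
    (hxs : l xs ≤ 0)
    (Proj : EuclideanSpace ℝ (Fin n))
    (hProj : Proj = if l x > 0 ∧ (inner ℝ y (gradl x) : ℝ) > 0 then
        y - (l x * ((inner ℝ (gradl x) y : ℝ) / ‖gradl x‖ ^ 2)) • gradl x
      else y) :
    (inner ℝ (x - xs) (Proj - y) : ℝ) ≤ 0 :=
  stmt5_general n x y xs l gradl hconv hgrad hxs Proj hProj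
end

section
/- Let x : [0,∞) → ℝⁿ solve ẋ = Proj(x, y(t), l) where l(x) = (‖x‖² - x̄²)/(2η x̄ + η²) and y is continuous. If l(x(0)) ≤ 1, then l(x(t)) ≤ 1, and hence ‖x(t)‖ ≤ x̄ + η, for all t ≥ 0. -/
/-!
Along the flow, `t ↦ l (x t)` has derivative `⟪∇l (x t), Proj (x t) (y t)⟫`. Whenever `l ≥ 1`, the
projection either leaves a `y` with `⟪y, ∇l⟫ ≤ 0` untouched or scales its `∇l`-component by
`1 - l ≤ 0`, so this derivative is nonpositive and the sublevel set `{l ≤ 1}`, which is the ball of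
radius `x̄ + η`, is forward invariant.
-/

open RealInnerProductSpace

theorem le_of_hasDerivAt_nonpos_of_le {f f' : ℝ → ℝ} {a C : ℝ} (ha : f a ≤ C)
    (hf : ∀ t ≥ a, HasDerivAt f (f' t) t) (hf' : ∀ t ≥ a, C ≤ f t → f' t ≤ 0) :
    ∀ t ≥ a, f t ≤ C := by
  intro T hT
  -- The fencing theorem wants a strict inequality on the boundary, hence the barriers
  -- `C + ε (t - a)` and the limit `ε → 0`.
  have fence : ∀ ε > 0, f T ≤ C + ε * (T - a) := by
    intro ε hε
    refine image_le_of_deriv_right_lt_deriv_boundary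
      (B := fun t ↦ C + ε * (t - a)) (B' := fun _ ↦ ε)
      (fun t ht ↦ (hf t ht.1).continuousAt.continuousWithinAt)
      (fun t ht ↦ (hf t ht.1).hasDerivWithinAt) (by simpa using ha)
      (fun t ↦ by simpa using ((hasDerivAt_id t).sub_const a).const_mul ε |>.const_add C)
      (fun t ht hft ↦ ?_) ⟨hT, le_rfl⟩
    have hCf : C ≤ f t := hft ▸ le_add_of_nonneg_right (by nlinarith [ht.1])
    exact (hf' t ht.1 hCf).trans_lt hε
  refine le_of_forall_pos_le_add fun ε hε ↦ ?_
  have hT1 : 0 < T - a + 1 := by linarith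
  calc f T ≤ C + ε / (T - a + 1) * (T - a) := fence _ (by positivity)
    _ ≤ C + ε := by
      gcongr C + ?_
      rw [div_mul_eq_mul_div, div_le_iff₀ hT1]
      linarith

theorem le_add_of_sq_sub_sq_div_le_one {r xbar η : ℝ} (hr : 0 ≤ r) (hxbar : 0 < xbar)
    (hη : 0 < η) (h : (r ^ 2 - xbar ^ 2) / (2 * η * xbar + η ^ 2) ≤ 1) : r ≤ xbar + η := by
  rw [div_le_one (by positivity)] at h
  exact (pow_le_pow_iff_left₀ hr (by positivity) two_ne_zero).1 (by linarith)

section ProjectionOperator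

variable {E : Type*} [NormedAddCommGroup E] [InnerProductSpace ℝ E]

/-- The projection operator `Proj(x, w, l)` at a point where `l x = a` and `∇l x = g`. -/
noncomputable def projOperator (a : ℝ) (g w : E) : E :=
  if a > 0 ∧ ⟪w, g⟫ > 0 then w - (a * (⟪g, w⟫ / ‖g‖ ^ 2)) • g else w

theorem inner_projOperator_nonpos {a : ℝ} (ha : 1 ≤ a) (g w : E) :
    ⟪g, projOperator a g w⟫ ≤ 0 := by
  unfold projOperator
  split_ifs with h
  · obtain ⟨-, hwg⟩ := h
    have hg : ‖g‖ ^ 2 ≠ 0 := by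
      intro hg
      simp only [pow_eq_zero_iff two_ne_zero, norm_eq_zero] at hg
      simp [hg] at hwg
    rw [inner_sub_right, real_inner_smul_right, real_inner_self_eq_norm_sq, mul_assoc,
      div_mul_cancel₀ _ hg, real_inner_comm]
    nlinarith
  · push Not at h
    rw [real_inner_comm]
    by_contra! hpos
    exact (h (by linarith)).not_gt hpos

end ProjectionOperator

theorem stmt7_general (n : ℕ) (xbar η : ℝ) (hxbar : 0 < xbar) (hη : 0 < η)
    (l : EuclideanSpace ℝ (Fin n) → ℝ)
    (hl : ∀ z, l z = (‖z‖ ^ 2 - xbar ^ 2) / (2 * η * xbar + η ^ 2))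
    (gradl : EuclideanSpace ℝ (Fin n) → EuclideanSpace ℝ (Fin n))
    (hgradl : ∀ z, gradl z = (2 / (2 * η * xbar + η ^ 2)) • z)
    (Proj : EuclideanSpace ℝ (Fin n) → EuclideanSpace ℝ (Fin n) → EuclideanSpace ℝ (Fin n))
    (hProj : ∀ z w, Proj z w = if l z > 0 ∧ (inner ℝ w (gradl z) : ℝ) > 0 then
        w - (l z * ((inner ℝ (gradl z) w : ℝ) / ‖gradl z‖ ^ 2)) • gradl z
      else w)
    (y : ℝ → EuclideanSpace ℝ (Fin n))
    (x : ℝ → EuclideanSpace ℝ (Fin n))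
    (hx : ∀ t ≥ (0 : ℝ), HasDerivAt x (Proj (x t) (y t)) t)
    (h0 : l (x 0) ≤ 1) :
    ∀ t ≥ (0 : ℝ), l (x t) ≤ 1 ∧ ‖x t‖ ≤ xbar + η := by
  have hProj' : ∀ z w, Proj z w = projOperator (l z) (gradl z) w := hProj
  have hlx : ∀ t ≥ (0 : ℝ),
      HasDerivAt (fun s ↦ l (x s)) ⟪gradl (x t), Proj (x t) (y t)⟫ t := by
    intro t ht
    simp_rw [hl, hgradl, real_inner_smul_left, div_mul_eq_mul_div]
    exact ((hx t ht).norm_sq.sub_const _).div_const _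
  have hsub : ∀ t ≥ (0 : ℝ), l (x t) ≤ 1 :=
    le_of_hasDerivAt_nonpos_of_le h0 hlx fun t _ hle ↦
      hProj' _ _ ▸ inner_projOperator_nonpos hle _ _
  refine fun t ht ↦ ⟨hsub t ht, le_add_of_sq_sub_sq_div_le_one (norm_nonneg _) hxbar hη ?_⟩
  exact hl (x t) ▸ hsub t ht

theorem stmt7 (n : ℕ) (xbar η : ℝ) (hxbar : 0 < xbar) (hη : 0 < η)
    (l : EuclideanSpace ℝ (Fin n) → ℝ)
    (hl : ∀ z, l z = (‖z‖ ^ 2 - xbar ^ 2) / (2 * η * xbar + η ^ 2))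
    (gradl : EuclideanSpace ℝ (Fin n) → EuclideanSpace ℝ (Fin n))
    (hgradl : ∀ z, gradl z = (2 / (2 * η * xbar + η ^ 2)) • z)
    (Proj : EuclideanSpace ℝ (Fin n) → EuclideanSpace ℝ (Fin n) → EuclideanSpace ℝ (Fin n))
    (hProj : ∀ z w, Proj z w = if l z > 0 ∧ (inner ℝ w (gradl z) : ℝ) > 0 then
        w - (l z * ((inner ℝ (gradl z) w : ℝ) / ‖gradl z‖ ^ 2)) • gradl z
      else w)
    (y : ℝ → EuclideanSpace ℝ (Fin n)) (hy : Continuous y)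
    (x : ℝ → EuclideanSpace ℝ (Fin n))
    (hx : ∀ t ≥ (0 : ℝ), HasDerivAt x (Proj (x t) (y t)) t)
    (h0 : l (x 0) ≤ 1) :
    ∀ t ≥ (0 : ℝ), l (x t) ≤ 1 ∧ ‖x t‖ ≤ xbar + η :=
  stmt7_general n xbar η hxbar hη l hl gradl hgradl Proj hProj y x hx h0
end
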